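/- arXiv:2404.18480 — 3 statements merged into one kernel-verified Lean document; each statement's English description precedes it below -/
import Mathlib

section
/- Let γ > 1, p(v) = v^{-γ}, and fix v₋ > 0. There exist constants c > 0 and δ* > 0 such that for all 0 < δ < δ* and all v, w > 0 with |p(v) - p(w)| < δ and |p(w) - p(v₋)| < δ, the relative pressure satisfies p(v|w) ≤ ((γ+1)/(2γ) · 1/p(w) + cδ) · |p(v) - p(w)|². -/
/-!
Pass to the pressure variable `P = p(v)`, `Q = p(w)` and the inverse `τ(P) = P ^ (-1/γ)`:
then `p(v|w) = -p'(w) · (τ(P) - τ(Q) - τ'(Q)(P - Q))`, and `-p'(w) · τ''(x) / 2` equals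
`(γ+1)/(2γ) · Q ^ (1 + 1/γ) · x ^ (-1/γ - 2)`. As `τ''` is decreasing, the Taylor remainder is
controlled by `τ''` at `Q - δ ≤ min P Q`, and `Q ^ (1 + 1/γ) (Q - δ) ^ (-1/γ - 2) = 1/Q + O(δ)`
uniformly while `Q` stays within `δ < p(v₋)/4` of `p(v₋)`.
-/

open Real Set

theorem Convex.norm_image_sub_sub_fderiv_le {E F : Type*} [NormedAddCommGroup E]
    [NormedSpace ℝ E] [NormedAddCommGroup F] [NormedSpace ℝ F] {f : E → F} {f' : E → E →L[ℝ] F} {s : Set E}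
    {K : ℝ} {x y : E} (hs : Convex ℝ s) (hf : ∀ z ∈ s, HasFDerivAt f (f' z) z)
    (hf' : ∀ z ∈ s, ‖f' z - f' x‖ ≤ K * ‖z - x‖) (hx : x ∈ s) (hy : y ∈ s) :
    ‖f y - f x - f' x (y - x)‖ ≤ K / 2 * ‖y - x‖ ^ 2 := by
  set g : ℝ → F := fun t => f (x + t • (y - x)) - f x - t • f' x (y - x)
  have hg : ∀ t ∈ Icc (0 : ℝ) 1,
      HasDerivAt g (f' (x + t • (y - x)) (y - x) - f' x (y - x)) t := by
    intro t ht
    have hline : HasDerivAt (fun t : ℝ => x + t • (y - x)) (y - x) t := by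
      simpa using ((hasDerivAt_id t).smul_const (y - x)).const_add x
    have := (((hf _ (hs.add_smul_sub_mem hx hy ht)).comp_hasDerivAt t hline).sub_const
      (f x)).sub ((hasDerivAt_id t).smul_const (f' x (y - x)))
    rwa [one_smul] at this
  have hB : ∀ t,
      HasDerivAt (fun t : ℝ => K / 2 * ‖y - x‖ ^ 2 * t ^ 2) (K * ‖y - x‖ ^ 2 * t) t :=
    fun t => ((hasDerivAt_pow 2 t).const_mul _).congr_deriv (by push_cast; ring)
  have key := image_norm_le_of_norm_deriv_right_le_deriv_boundary
    (fun t ht => (hg t ht).continuousAt.continuousWithinAt)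
    (fun t ht => (hg t (Ico_subset_Icc_self ht)).hasDerivWithinAt) (by simp [g]) hB
    (fun t ht => by
      have hz := hs.add_smul_sub_mem hx hy (Ico_subset_Icc_self ht)
      calc ‖f' (x + t • (y - x)) (y - x) - f' x (y - x)‖
          ≤ ‖f' (x + t • (y - x)) - f' x‖ * ‖y - x‖ := by
            rw [← sub_apply]; exact ContinuousLinearMap.le_opNorm _ _
        _ ≤ K * ‖t • (y - x)‖ * ‖y - x‖ := by
            simpa using mul_le_mul_of_nonneg_right (hf' _ hz) (norm_nonneg (y - x))
        _ = K * ‖y - x‖ ^ 2 * t := by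
            rw [norm_smul, Real.norm_of_nonneg ht.1]; ring)
    (right_mem_Icc.2 zero_le_one)
  simpa [g] using key

theorem image_sub_sub_deriv_le_of_abs_deriv_sub_le {f f' : ℝ → ℝ} {s : Set ℝ} {K x y : ℝ}
    (hs : Convex ℝ s) (hf : ∀ z ∈ s, HasDerivAt f (f' z) z)
    (hf' : ∀ z ∈ s, |f' z - f' x| ≤ K * |z - x|) (hx : x ∈ s) (hy : y ∈ s) :
    f y - f x - f' x * (y - x) ≤ K / 2 * (y - x) ^ 2 := by
  have hsmul : ∀ a b : ℝ, (1 : ℝ →L[ℝ] ℝ).smulRight a - (1 : ℝ →L[ℝ] ℝ).smulRight b =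
      (1 : ℝ →L[ℝ] ℝ).smulRight (a - b) := fun a b => by ext; simp
  have h := hs.norm_image_sub_sub_fderiv_le (f' := fun z => (1 : ℝ →L[ℝ] ℝ).smulRight (f' z))
    (fun z hz => hf z hz) (fun z hz => by simpa [hsmul] using hf' z hz) hx hy
  rw [Real.norm_eq_abs, Real.norm_eq_abs, sq_abs] at h
  simpa [mul_comm] using (le_abs_self _).trans h

lemma abs_rpow_neg_sub_rpow_neg_le {α m a b : ℝ} (hα : 0 < α) (hm : 0 < m) (ha : m ≤ a)
    (hb : m ≤ b) : |a ^ (-α) - b ^ (-α)| ≤ α * m ^ (-α - 1) * |a - b| := by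
  have hderiv_le : ∀ x ∈ Ici m, ‖-α * x ^ (-α - 1)‖ ≤ α * m ^ (-α - 1) := fun x hx => by
    have hx0 : 0 < x := hm.trans_le hx
    rw [norm_mul, norm_neg, Real.norm_of_nonneg hα.le, Real.norm_of_nonneg (by positivity)]
    exact mul_le_mul_of_nonneg_left (rpow_le_rpow_of_nonpos hm hx (by linarith)) hα.le
  simpa [Real.norm_eq_abs] using (convex_Ici m).norm_image_sub_le_of_norm_hasDerivWithin_le
    (fun x hx => (hasDerivAt_rpow_const (Or.inl (hm.trans_le hx).ne')).hasDerivWithinAt)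
    hderiv_le hb ha

lemma rpow_neg_sub_sub_deriv_le {α a P Q : ℝ} (hα : 0 < α) (ha : 0 < a) (hP : a ≤ P)
    (hQ : a ≤ Q) :
    P ^ (-α) - Q ^ (-α) - (-α * Q ^ (-α - 1)) * (P - Q) ≤
      α * (α + 1) * a ^ (-α - 2) / 2 * (P - Q) ^ 2 := by
  refine image_sub_sub_deriv_le_of_abs_deriv_sub_le (f := fun x => x ^ (-α)) (convex_Ici a)
    (fun z hz => hasDerivAt_rpow_const (Or.inl (ha.trans_le hz).ne')) (fun z hz => ?_) hQ hP
  have h := abs_rpow_neg_sub_rpow_neg_le (α := α + 1) (by positivity) ha hz hQ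
  rw [show -(α + 1) = -α - 1 by ring, show -α - 1 - 1 = -α - 2 by ring] at h
  calc |-α * z ^ (-α - 1) - -α * Q ^ (-α - 1)| = α * |z ^ (-α - 1) - Q ^ (-α - 1)| := by
        rw [← mul_sub, abs_mul, abs_neg, abs_of_pos hα]
    _ ≤ α * ((α + 1) * a ^ (-α - 2) * |z - Q|) := mul_le_mul_of_nonneg_left h hα.le
    _ = α * (α + 1) * a ^ (-α - 2) * |z - Q| := by ring

lemma rpow_neg_sub_sub_deriv_eq {γ v w : ℝ} (hγ : γ ≠ 0) (hv : 0 < v) (hw : 0 < w) :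
    v ^ (-γ) - w ^ (-γ) - (-γ * w ^ (-γ - 1)) * (v - w) =
      γ * (w ^ (-γ)) ^ (1 + γ⁻¹) * ((v ^ (-γ)) ^ (-γ⁻¹) - (w ^ (-γ)) ^ (-γ⁻¹) -
        (-γ⁻¹ * (w ^ (-γ)) ^ (-γ⁻¹ - 1)) * (v ^ (-γ) - w ^ (-γ))) := by
  simp only [← rpow_mul hv.le, ← rpow_mul hw.le]
  rw [show -γ * -γ⁻¹ = 1 by field_simp, show -γ * (1 + γ⁻¹) = -γ - 1 by field_simp; ring,
    show -γ * (-γ⁻¹ - 1) = γ + 1 by field_simp; ring, rpow_one, rpow_one]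
  have hinv : w ^ (-γ - 1) * w ^ (γ + 1) = 1 := by
    rw [← rpow_add hw, show -γ - 1 + (γ + 1) = 0 by ring, rpow_zero]
  linear_combination
    (w ^ (-γ) - v ^ (-γ)) * (w ^ (-γ - 1) * w ^ (γ + 1) * mul_inv_cancel₀ hγ + hinv)

lemma rpow_mul_rpow_sub_le {α m M Q δ : ℝ} (hα : 0 < α) (hm : 0 < m) (hmQ : m ≤ Q - δ)
    (hQM : Q ≤ M) (hδ : 0 ≤ δ) :
    Q ^ (1 + α) * (Q - δ) ^ (-α - 2) ≤ 1 / Q + M ^ (1 + α) * ((α + 2) * m ^ (-α - 3)) * δ := by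
  have hQ : 0 < Q := by linarith
  have hQQ : Q ^ (1 + α) * Q ^ (-α - 2) = 1 / Q := by
    rw [← rpow_add hQ, show 1 + α + (-α - 2) = -1 by ring, rpow_neg_one, one_div]
  have hdiff : (Q - δ) ^ (-α - 2) - Q ^ (-α - 2) ≤ (α + 2) * m ^ (-α - 3) * δ := by
    have h :=
      abs_rpow_neg_sub_rpow_neg_le (α := α + 2) (b := Q) (by positivity) hm hmQ (by linarith)
    rw [show -(α + 2) = -α - 2 by ring, show -α - 2 - 1 = -α - 3 by ring,
      show Q - δ - Q = -δ by ring, abs_neg, abs_of_nonneg hδ] at h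
    exact (le_abs_self _).trans h
  have hpow : Q ^ (1 + α) ≤ M ^ (1 + α) := rpow_le_rpow hQ.le hQM (by positivity)
  calc Q ^ (1 + α) * (Q - δ) ^ (-α - 2)
      = 1 / Q + Q ^ (1 + α) * ((Q - δ) ^ (-α - 2) - Q ^ (-α - 2)) := by rw [← hQQ]; ring
    _ ≤ 1 / Q + Q ^ (1 + α) * ((α + 2) * m ^ (-α - 3) * δ) := by gcongr
    _ ≤ 1 / Q + M ^ (1 + α) * ((α + 2) * m ^ (-α - 3) * δ) := by gcongr
    _ = 1 / Q + M ^ (1 + α) * ((α + 2) * m ^ (-α - 3)) * δ := by ring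

/-- For γ > 1, p(v) = v^(-γ), vminus > 0, there exist c, δ* > 0 such that for all
0 < δ < δ*, and all v, w > 0 with |p(v)-p(w)| < δ and |p(w)-p(vminus)| < δ,
p(v|w) ≤ ((γ+1)/(2γ) · 1/p(w) + cδ) |p(v)-p(w)|². -/
theorem stmt_3 (γ : ℝ) (hγ : 1 < γ) (vminus : ℝ) (hvminus : 0 < vminus) :
    ∃ c : ℝ, 0 < c ∧ ∃ δs : ℝ, 0 < δs ∧ ∀ δ : ℝ, 0 < δ → δ < δs →
      ∀ v w : ℝ, 0 < v → 0 < w →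
        |v ^ (-γ) - w ^ (-γ)| < δ → |w ^ (-γ) - vminus ^ (-γ)| < δ →
        v ^ (-γ) - w ^ (-γ) - (-γ * w ^ (-γ - 1)) * (v - w) ≤
          ((γ + 1) / (2 * γ) * (1 / w ^ (-γ)) + c * δ) * |v ^ (-γ) - w ^ (-γ)| ^ 2 := by
  have hγ0 : 0 < γ := by linarith
  set pminus := vminus ^ (-γ)
  have hpminus : 0 < pminus := rpow_pos_of_pos hvminus _
  set C := (2 * pminus) ^ (1 + γ⁻¹) * ((γ⁻¹ + 2) * (pminus / 2) ^ (-γ⁻¹ - 3))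
  refine ⟨(γ + 1) / (2 * γ) * C, by positivity, pminus / 4, by positivity,
    fun δ hδ hδs v w hv hw hPQ hQpm => ?_⟩
  set P := v ^ (-γ)
  set Q := w ^ (-γ)
  have hQ0 : 0 < Q := rpow_pos_of_pos hw _
  obtain ⟨hPQ₁, -⟩ := abs_lt.mp hPQ
  obtain ⟨hQ₁, hQ₂⟩ := abs_lt.mp hQpm
  calc P - Q - (-γ * w ^ (-γ - 1)) * (v - w)
      = γ * Q ^ (1 + γ⁻¹) * (P ^ (-γ⁻¹) - Q ^ (-γ⁻¹) - (-γ⁻¹ * Q ^ (-γ⁻¹ - 1)) * (P - Q)) :=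
        rpow_neg_sub_sub_deriv_eq hγ0.ne' hv hw
    _ ≤ γ * Q ^ (1 + γ⁻¹) * (γ⁻¹ * (γ⁻¹ + 1) * (Q - δ) ^ (-γ⁻¹ - 2) / 2 * (P - Q) ^ 2) := by
        gcongr
        exact rpow_neg_sub_sub_deriv_le (by positivity) (by linarith) (by linarith) (by linarith)
    _ = (γ + 1) / (2 * γ) * (Q ^ (1 + γ⁻¹) * (Q - δ) ^ (-γ⁻¹ - 2)) * (P - Q) ^ 2 := by
        field_simp
        ring
    _ ≤ (γ + 1) / (2 * γ) * (1 / Q + C * δ) * (P - Q) ^ 2 := by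
        gcongr
        exact rpow_mul_rpow_sub_le (by positivity) (by positivity) (by linarith) (by linarith)
          hδ.le
    _ = ((γ + 1) / (2 * γ) * (1 / Q) + (γ + 1) / (2 * γ) * C * δ) * |P - Q| ^ 2 := by
        rw [sq_abs]; ring
end

section
/- Let γ > 1, p(v) = v^{-γ}, H(v) = v^{1-γ}/(γ-1), and fix v₋ > 0. There exist c > 0 and δ* > 0 such that for all 0 < δ < δ* and all v, w > 0 with |p(v) - p(w)| < δ and |p(w) - p(v₋)| < δ, one has H(v|w) ≤ (p(w)^{-1/γ - 1}/(2γ) + cδ) |p(v) - p(w)|². -/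
/-!
In the pressure variable the relative energy is `E(q) - E(r)` with `q = p(v)`, `r = p(w)` and
`E(t) = H(t^(-1/γ)) + r t^(-1/γ)`, whose derivative `(t - r) t^(-1/γ-1) / γ` vanishes at `r`.
Comparing with a quadratic shows `E(q) - E(r) ≤ K/2 (q - r)²` whenever `t^(-1/γ-1) / γ ≤ K`
between `q` and `r`. Near `p(v₋)` the power `t^(-1/γ-1)` is Lipschitz, so
`K = (p(w)^(-1/γ-1) + L δ) / γ` works.
-/

open Set

theorem sub_le_half_mul_sq_of_hasDerivAt_eq_sub_mul {F g : ℝ → ℝ} {r q K : ℝ}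
    (hF : ∀ t ∈ uIcc r q, HasDerivAt F ((t - r) * g t) t) (hg : ∀ t ∈ uIcc r q, g t ≤ K) :
    F q - F r ≤ K / 2 * (q - r) ^ 2 := by
  -- Along `s ↦ r + s (q - r)` the derivative of `F` minus that of the quadratic
  -- is `s (q - r)² (g - K) ≤ 0`.
  set ψ : ℝ → ℝ := fun s => F (r + s * (q - r)) - K / 2 * (s * (q - r)) ^ 2
  have hpath : ∀ s ∈ Icc (0 : ℝ) 1, r + s * (q - r) ∈ uIcc r q := fun s hs =>
    (convex_uIcc r q).add_smul_sub_mem left_mem_uIcc right_mem_uIcc hs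
  have hψ : ∀ s ∈ Icc (0 : ℝ) 1,
      HasDerivAt ψ (s * (q - r) ^ 2 * (g (r + s * (q - r)) - K)) s := by
    intro s hs
    have hline : HasDerivAt (fun s : ℝ => r + s * (q - r)) (q - r) s := by
      simpa using ((hasDerivAt_id s).mul_const (q - r)).const_add r
    have hsq : HasDerivAt (fun s : ℝ => K / 2 * (s * (q - r)) ^ 2)
        (K / 2 * (2 * (s * (q - r)) * (q - r))) s := by
      simpa using (((hasDerivAt_id s).mul_const (q - r)).pow 2).const_mul (K / 2)
    exact (((hF _ (hpath s hs)).comp s hline).sub hsq).congr_deriv (by ring)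
  have hanti : AntitoneOn ψ (Icc 0 1) := by
    refine antitoneOn_of_hasDerivWithinAt_nonpos (convex_Icc 0 1)
      (fun s hs => (hψ s hs).continuousAt.continuousWithinAt)
      (fun s hs => (hψ s (interior_subset hs)).hasDerivWithinAt) fun s hs => ?_
    rw [interior_Icc] at hs
    have := hg _ (hpath s (Ioo_subset_Icc_self hs))
    exact mul_nonpos_of_nonneg_of_nonpos (mul_nonneg hs.1.le (sq_nonneg _)) (by linarith)
  have := hanti (left_mem_Icc.2 zero_le_one) (right_mem_Icc.2 zero_le_one) zero_le_one
  simp [ψ] at this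
  linarith

theorem abs_rpow_sub_rpow_le_of_neg {e a s t : ℝ} (he : e < 0) (ha : 0 < a) (hs : a ≤ s)
    (ht : a ≤ t) : |s ^ e - t ^ e| ≤ -e * a ^ (e - 1) * |s - t| := by
  have hderiv :
      ∀ x ∈ Ici a, HasDerivWithinAt (fun x : ℝ => x ^ e) (e * x ^ (e - 1)) (Ici a) x :=
    fun x hx => (Real.hasDerivAt_rpow_const (Or.inl (ha.trans_le hx).ne')).hasDerivWithinAt
  have hbound : ∀ x ∈ Ici a, ‖e * x ^ (e - 1)‖ ≤ -e * a ^ (e - 1) := by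
    intro x hx
    have hx₀ : 0 < x := ha.trans_le hx
    rw [Real.norm_eq_abs, abs_mul, abs_of_neg he, abs_of_pos (Real.rpow_pos_of_pos hx₀ _)]
    exact mul_le_mul_of_nonneg_left (Real.rpow_le_rpow_of_nonpos ha hx (by linarith))
      (by linarith)
  exact Convex.norm_image_sub_le_of_norm_hasDerivWithin_le hderiv hbound (convex_Ici a) ht hs

/-- `H(v) + r v` evaluated at `v = t^(-1/γ)`, i.e. at pressure `p(v) = t`. -/
noncomputable def energyAtPressure (γ r t : ℝ) : ℝ :=
  t ^ ((γ - 1) / γ) / (γ - 1) + r * t ^ (-1 / γ)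

theorem hasDerivAt_energyAtPressure {γ r t : ℝ} (hγ : 1 < γ) (ht : 0 < t) :
    HasDerivAt (energyAtPressure γ r) ((t - r) * (t ^ (-1 / γ - 1) / γ)) t := by
  have hγ0 : γ ≠ 0 := by positivity
  have hγ1 : γ - 1 ≠ 0 := by linarith
  have hH :=
    (Real.hasDerivAt_rpow_const (p := (γ - 1) / γ) (Or.inl ht.ne')).div_const (γ - 1)
  have hv := (Real.hasDerivAt_rpow_const (p := -1 / γ) (Or.inl ht.ne')).const_mul r
  refine (hH.add hv).congr_deriv ?_
  have hexp : (γ - 1) / γ - 1 = -1 / γ - 1 + 1 := by field_simp; ring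
  rw [hexp, Real.rpow_add_one ht.ne']
  field_simp
  ring

theorem relEnergy_eq_energyAtPressure_sub {γ v w : ℝ} (hγ : γ ≠ 0) (hv : 0 < v)
    (hw : 0 < w) :
    v ^ (1 - γ) / (γ - 1) - w ^ (1 - γ) / (γ - 1) - (-(w ^ (-γ))) * (v - w) =
      energyAtPressure γ (w ^ (-γ)) (v ^ (-γ)) -
        energyAtPressure γ (w ^ (-γ)) (w ^ (-γ)) := by
  have hexp₁ : -γ * ((γ - 1) / γ) = 1 - γ := by field_simp; ring
  have hexp₂ : -γ * (-1 / γ) = 1 := by field_simp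
  simp only [energyAtPressure, ← Real.rpow_mul hv.le, ← Real.rpow_mul hw.le, hexp₁, hexp₂,
    Real.rpow_one]
  ring

/-- For γ > 1, p(v) = v^(-γ), H(v) = v^(1-γ)/(γ-1), vminus > 0, there exist c, δ* > 0
such that for all 0 < δ < δ*, and v, w > 0 with |p(v)-p(w)| < δ, |p(w)-p(vminus)| < δ,
H(v|w) ≤ (p(w)^(-1/γ-1)/(2γ) + cδ) |p(v)-p(w)|². -/
theorem stmt_5 (γ : ℝ) (hγ : 1 < γ) (vminus : ℝ) (hvminus : 0 < vminus) :
    ∃ c : ℝ, 0 < c ∧ ∃ δs : ℝ, 0 < δs ∧ ∀ δ : ℝ, 0 < δ → δ < δs →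
      ∀ v w : ℝ, 0 < v → 0 < w →
        |v ^ (-γ) - w ^ (-γ)| < δ → |w ^ (-γ) - vminus ^ (-γ)| < δ →
        v ^ (1 - γ) / (γ - 1) - w ^ (1 - γ) / (γ - 1) - (-(w ^ (-γ))) * (v - w) ≤
          ((w ^ (-γ)) ^ (-1 / γ - 1) / (2 * γ) + c * δ) * |v ^ (-γ) - w ^ (-γ)| ^ 2 := by
  have hγ0 : 0 < γ := by linarith
  set a := vminus ^ (-γ) / 2 with ha_def
  have ha : 0 < a := by positivity
  set L := (1 / γ + 1) * a ^ (-1 / γ - 2)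
  refine ⟨L / (2 * γ), by positivity, a / 2, by positivity, ?_⟩
  intro δ hδ hδs v w hv hw hvw hwm
  rw [relEnergy_eq_energyAtPressure_sub hγ0.ne' hv hw]
  set q := v ^ (-γ)
  set r := w ^ (-γ)
  have hr' : a + a / 2 ≤ r := by linarith [(abs_sub_lt_iff.mp hwm).2]
  have hr : a ≤ r := by linarith
  have hq : a ≤ q := by linarith [(abs_sub_lt_iff.mp hvw).2]
  have hexp : -1 / γ - 1 < 0 := by
    rw [neg_div]
    linarith [one_div_pos.mpr hγ0]
  have hg : ∀ t ∈ uIcc r q, t ^ (-1 / γ - 1) / γ ≤ (r ^ (-1 / γ - 1) + L * δ) / γ := by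
    intro t ht
    have hta : a ≤ t := (le_inf hr hq).trans ht.1
    have hlip := abs_rpow_sub_rpow_le_of_neg hexp ha hta hr
    have htr : |t - r| ≤ δ := ((abs_sub_left_of_mem_uIcc ht).trans_lt hvw).le
    have hL : -(-1 / γ - 1) * a ^ (-1 / γ - 1 - 1) = L := by
      rw [show -1 / γ - 1 - 1 = -1 / γ - 2 by ring]
      ring
    rw [hL] at hlip
    gcongr
    linarith [le_abs_self (t ^ (-1 / γ - 1) - r ^ (-1 / γ - 1)),
      mul_le_mul_of_nonneg_left htr (by positivity : 0 ≤ L)]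
  have hF : ∀ t ∈ uIcc r q,
      HasDerivAt (energyAtPressure γ r) ((t - r) * (t ^ (-1 / γ - 1) / γ)) t :=
    fun t ht => hasDerivAt_energyAtPressure hγ (ha.trans_le ((le_inf hr hq).trans ht.1))
  calc _ ≤ (r ^ (-1 / γ - 1) + L * δ) / γ / 2 * (q - r) ^ 2 :=
        sub_le_half_mul_sq_of_hasDerivAt_eq_sub_mul hF hg
    _ = _ := by rw [sq_abs]; ring
end

section
/- Let a: ℝ → ℝ be C¹ with a, a' bounded, and let H(v|w) = H(v) − H(w) + p(w)(v − w) where H(v) = v^{1-γ}/(γ−1), p(v) = v^{-γ}, γ > 1. Suppose v, ṽ: ℝ → (0,∞) are C¹, with v − ṽ and derivatives decaying suitably at infinity and σ a constant. Then the identity ∫_ℝ a(ξ)[−p(v)σ v' + p'(ṽ)σ ṽ'(v − ṽ) + p(ṽ)σ v'] dξ = −σ ∫_ℝ a'(ξ) H(v|ṽ) dξ holds, where prime denotes ∂_ξ. -/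
open MeasureTheory Filter Topology

/-! Since `H' = -p`, the bracket multiplying `a` is exactly the `ξ`-derivative of the relative
entropy `H(v|ṽ) = H(v) - H(ṽ) + p(ṽ)(v - ṽ)`; one integration by parts against `a`, whose
boundary terms vanish, gives the identity. -/

theorem hasDerivAt_relEntropy_comp {H p p' v w : ℝ → ℝ} {v' w' x : ℝ}
    (hHv : HasDerivAt H (-p (v x)) (v x)) (hHw : HasDerivAt H (-p (w x)) (w x))
    (hp : HasDerivAt p (p' (w x)) (w x)) (hv : HasDerivAt v v' x) (hw : HasDerivAt w w' x) :
    HasDerivAt (fun ξ => H (v ξ) - H (w ξ) + p (w ξ) * (v ξ - w ξ))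
      (-p (v x) * v' + p' (w x) * w' * (v x - w x) + p (w x) * v') x := by
  refine (((hHv.comp x hv).sub (hHw.comp x hw)).add
    ((hp.comp x hw).mul (hv.sub hw))).congr_deriv ?_
  simp only [Function.comp_apply, Pi.sub_apply]
  ring

theorem hasDerivAt_rpow_one_sub_div {γ y : ℝ} (hγ : γ ≠ 1) (hy : y ≠ 0) :
    HasDerivAt (fun y : ℝ => y ^ (1 - γ) / (γ - 1)) (-y ^ (-γ)) y := by
  have hγ' : γ - 1 ≠ 0 := sub_ne_zero.mpr hγ
  refine ((Real.hasDerivAt_rpow_const (p := 1 - γ) (Or.inl hy)).div_const (γ - 1)).congr_deriv ?_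
  rw [show 1 - γ - 1 = -γ by ring]
  field_simp
  ring

theorem hasDerivAt_relEntropy_rpow {γ v' w' x : ℝ} {v w : ℝ → ℝ} (hγ : γ ≠ 1)
    (hvx : v x ≠ 0) (hwx : w x ≠ 0) (hv : HasDerivAt v v' x) (hw : HasDerivAt w w' x) :
    HasDerivAt (fun ξ => v ξ ^ (1 - γ) / (γ - 1) - w ξ ^ (1 - γ) / (γ - 1)
        + w ξ ^ (-γ) * (v ξ - w ξ))
      (-v x ^ (-γ) * v' + (-γ * w x ^ (-γ - 1)) * w' * (v x - w x) + w x ^ (-γ) * v') x :=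
  hasDerivAt_relEntropy_comp (H := fun y => y ^ (1 - γ) / (γ - 1)) (p := fun y => y ^ (-γ))
    (p' := fun y => -γ * y ^ (-γ - 1)) (hasDerivAt_rpow_one_sub_div hγ hvx)
    (hasDerivAt_rpow_one_sub_div hγ hwx) (Real.hasDerivAt_rpow_const (Or.inl hwx)) hv hw

/-- The factor `c` stays inside the integrand so that for `c = 0` nothing is assumed about
`u * f'`. -/
theorem integral_mul_const_mul_deriv_eq_neg {u u' f f' : ℝ → ℝ} (c : ℝ)
    (hu : ∀ x, HasDerivAt u (u' x) x) (hf : ∀ x, HasDerivAt f (f' x) x)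
    (huf' : Integrable fun x => u x * (c * f' x)) (hu'f : Integrable fun x => u' x * f x)
    (h_bot : Tendsto (fun x => u x * f x) atBot (𝓝 0))
    (h_top : Tendsto (fun x => u x * f x) atTop (𝓝 0)) :
    ∫ x, u x * (c * f' x) = -c * ∫ x, u' x * f x := by
  have hc (g h : ℝ → ℝ) : (g * fun x => c * h x) = fun x => c * (g x * h x) :=
    funext fun x => mul_left_comm (g x) c (h x)
  have hibp := integral_mul_deriv_eq_deriv_mul (a' := 0) (b' := 0) (fun x _ => hu x)
    (fun x _ => (hf x).const_mul c) huf' (by rw [hc]; exact hu'f.const_mul c)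
    (by rw [hc, ← mul_zero c]; exact h_bot.const_mul c)
    (by rw [hc, ← mul_zero c]; exact h_top.const_mul c)
  rw [hibp]
  simp only [mul_left_comm _ c, integral_const_mul]
  ring

theorem stmt_16_general (γ σ : ℝ) (hγ : 1 < γ)
    (a v vv : ℝ → ℝ)
    (ha : ContDiff ℝ 1 a)
    (hv : ContDiff ℝ 1 v) (hvv : ContDiff ℝ 1 vv)
    (hvpos : ∃ m : ℝ, 0 < m ∧ ∀ ξ, m ≤ v ξ ∧ m ≤ vv ξ)
    (hint1 : Integrable (fun ξ =>
      a ξ * (-(v ξ) ^ (-γ) * σ * deriv v ξ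
        + (-γ * (vv ξ) ^ (-γ - 1)) * σ * deriv vv ξ * (v ξ - vv ξ)
        + (vv ξ) ^ (-γ) * σ * deriv v ξ)))
    (hint2 : Integrable (fun ξ =>
      deriv a ξ * ((v ξ) ^ (1 - γ) / (γ - 1) - (vv ξ) ^ (1 - γ) / (γ - 1)
        + (vv ξ) ^ (-γ) * (v ξ - vv ξ))))
    (hbdryT : Filter.Tendsto (fun ξ =>
      a ξ * ((v ξ) ^ (1 - γ) / (γ - 1) - (vv ξ) ^ (1 - γ) / (γ - 1)
        + (vv ξ) ^ (-γ) * (v ξ - vv ξ))) Filter.atTop (nhds 0))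
    (hbdryB : Filter.Tendsto (fun ξ =>
      a ξ * ((v ξ) ^ (1 - γ) / (γ - 1) - (vv ξ) ^ (1 - γ) / (γ - 1)
        + (vv ξ) ^ (-γ) * (v ξ - vv ξ))) Filter.atBot (nhds 0)) :
    (∫ ξ : ℝ, a ξ * (-(v ξ) ^ (-γ) * σ * deriv v ξ
        + (-γ * (vv ξ) ^ (-γ - 1)) * σ * deriv vv ξ * (v ξ - vv ξ)
        + (vv ξ) ^ (-γ) * σ * deriv v ξ)) =
      -σ * ∫ ξ : ℝ, deriv a ξ * ((v ξ) ^ (1 - γ) / (γ - 1) - (vv ξ) ^ (1 - γ) / (γ - 1)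
        + (vv ξ) ^ (-γ) * (v ξ - vv ξ)) := by
  obtain ⟨m, hm, hmle⟩ := hvpos
  have hasDerivAt_of_contDiff {f : ℝ → ℝ} (hf : ContDiff ℝ 1 f) (ξ : ℝ) :
      HasDerivAt f (deriv f ξ) ξ :=
    (hf.differentiable one_ne_zero ξ).hasDerivAt
  set G : ℝ → ℝ := fun ξ => -(v ξ) ^ (-γ) * deriv v ξ
    + (-γ * (vv ξ) ^ (-γ - 1)) * deriv vv ξ * (v ξ - vv ξ) + (vv ξ) ^ (-γ) * deriv v ξ
  have hG : (fun ξ => a ξ * (-(v ξ) ^ (-γ) * σ * deriv v ξ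
      + (-γ * (vv ξ) ^ (-γ - 1)) * σ * deriv vv ξ * (v ξ - vv ξ)
      + (vv ξ) ^ (-γ) * σ * deriv v ξ)) = fun ξ => a ξ * (σ * G ξ) := by
    ext ξ
    ring
  rw [hG] at hint1 ⊢
  refine integral_mul_const_mul_deriv_eq_neg σ (hasDerivAt_of_contDiff ha) (fun ξ => ?_)
    hint1 hint2 hbdryB hbdryT
  exact hasDerivAt_relEntropy_rpow hγ.ne' (hm.trans_le (hmle ξ).1).ne'
    (hm.trans_le (hmle ξ).2).ne' (hasDerivAt_of_contDiff hv ξ) (hasDerivAt_of_contDiff hvv ξ)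

/-- Key integration-by-parts identity: with H(v) = v^(1-γ)/(γ-1),
p(v) = v^(-γ), H(v|w) = H(v) − H(w) + p(w)(v − w), under suitable integrability and
decay hypotheses,
∫ a(ξ)[−p(v)σv' + p'(vv)σvv'(v−vv) + p(vv)σv'] dξ = −σ ∫ a'(ξ) H(v|vv) dξ. -/
theorem stmt_16 (γ σ : ℝ) (hγ : 1 < γ)
    (a v vv : ℝ → ℝ)
    (ha : ContDiff ℝ 1 a) (habd : ∃ M : ℝ, ∀ ξ, |a ξ| + |deriv a ξ| ≤ M)
    (hv : ContDiff ℝ 1 v) (hvv : ContDiff ℝ 1 vv)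
    (hvpos : ∃ m : ℝ, 0 < m ∧ ∀ ξ, m ≤ v ξ ∧ m ≤ vv ξ)
    (hvbd : ∃ M : ℝ, ∀ ξ, v ξ ≤ M ∧ vv ξ ≤ M)
    (hint1 : Integrable (fun ξ =>
      a ξ * (-(v ξ) ^ (-γ) * σ * deriv v ξ
        + (-γ * (vv ξ) ^ (-γ - 1)) * σ * deriv vv ξ * (v ξ - vv ξ)
        + (vv ξ) ^ (-γ) * σ * deriv v ξ)))
    (hint2 : Integrable (fun ξ =>
      deriv a ξ * ((v ξ) ^ (1 - γ) / (γ - 1) - (vv ξ) ^ (1 - γ) / (γ - 1)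
        + (vv ξ) ^ (-γ) * (v ξ - vv ξ))))
    (hbdryT : Filter.Tendsto (fun ξ =>
      a ξ * ((v ξ) ^ (1 - γ) / (γ - 1) - (vv ξ) ^ (1 - γ) / (γ - 1)
        + (vv ξ) ^ (-γ) * (v ξ - vv ξ))) Filter.atTop (nhds 0))
    (hbdryB : Filter.Tendsto (fun ξ =>
      a ξ * ((v ξ) ^ (1 - γ) / (γ - 1) - (vv ξ) ^ (1 - γ) / (γ - 1)
        + (vv ξ) ^ (-γ) * (v ξ - vv ξ))) Filter.atBot (nhds 0)) :
    (∫ ξ : ℝ, a ξ * (-(v ξ) ^ (-γ) * σ * deriv v ξ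
        + (-γ * (vv ξ) ^ (-γ - 1)) * σ * deriv vv ξ * (v ξ - vv ξ)
        + (vv ξ) ^ (-γ) * σ * deriv v ξ)) =
      -σ * ∫ ξ : ℝ, deriv a ξ * ((v ξ) ^ (1 - γ) / (γ - 1) - (vv ξ) ^ (1 - γ) / (γ - 1)
        + (vv ξ) ^ (-γ) * (v ξ - vv ξ)) :=
  stmt_16_general γ σ hγ a v vv ha hv hvv hvpos hint1 hint2 hbdryT hbdryB
end
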